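/- arXiv:0705.2439 — 3 statements merged into one kernel-verified Lean document; each statement's English description precedes it below -/
import Mathlib

section
/- For every n ≥ 2 and every k ∈ {1, 2, …, n−1}, there exists an injective positive edge-weight function on the complete graph G on n vertices such that |M_k(G)| = nk − k(k+1)/2. (Concretely: fix V′ ⊆ V with |V′| = k, partition the edges into E_0, E_1, E_2 according to whether they have 0, 1, or 2 endpoints in V′, and choose distinct positive weights so that every weight on E_2 is smaller than every weight on E_1, which in turn are smaller than every weight on E_0; then M_k(G) = E_2 ∪ E_1.) -/
/-- `IsSpanningTreeOn S T` : `T` is the edge set of a spanning tree of the complete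
graph on the vertex set `S`: all edges of `T` are non-loop edges with both endpoints
in `S`, all vertices of `S` are pairwise connected using edges of `T`, and
`|T| = |S| - 1`. -/
def IsSpanningTreeOn {V : Type*} [Fintype V] [DecidableEq V]
    (S : Finset V) (T : Finset (Sym2 V)) : Prop :=
  (∀ e ∈ T, ¬ e.IsDiag ∧ ∀ v ∈ e, v ∈ S) ∧
  (∀ u ∈ S, ∀ v ∈ S, (SimpleGraph.fromEdgeSet (↑T : Set (Sym2 V))).Reachable u v) ∧
  T.card + 1 = S.card

/-- The edge set of the (unique, since weights are injective) minimum spanning tree of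
the complete graph on the vertex set `S` with edge weights `w`: the set of edges
belonging to some minimum-weight spanning tree on `S`. -/
def mstEdges {V : Type*} [Fintype V] [DecidableEq V] (w : Sym2 V → ℝ) (S : Finset V) :
    Set (Sym2 V) :=
  {e | ∃ T : Finset (Sym2 V), IsSpanningTreeOn S T ∧
        (∀ T' : Finset (Sym2 V), IsSpanningTreeOn S T' → T.sum w ≤ T'.sum w) ∧ e ∈ T}

/-- `Mk w k` = `M_k(G)`: the union of the edge sets of the minimum spanning trees of all
induced subgraphs of the complete graph on `V` obtained by deleting `k - 1` vertices. -/
def Mk {V : Type*} [Fintype V] [DecidableEq V] (w : Sym2 V → ℝ) (k : ℕ) : Set (Sym2 V) :=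
  {e | ∃ X : Finset V, X.card = k - 1 ∧ e ∈ mstEdges w (Finset.univ \ X)}

/-- Two walks from `u` to `v` are internally disjoint if the only vertices they share
are `u` and `v`. -/
def InternallyDisjoint {V : Type*} {G : SimpleGraph V} {u v : V}
    (p q : G.Walk u v) : Prop :=
  ∀ x, x ∈ p.support → x ∈ q.support → x = u ∨ x = v

/-- `HasDisjointPaths G u v k` : `G` contains (at least) `k` pairwise internally
vertex-disjoint paths between `u` and `v`. -/
def HasDisjointPaths {V : Type*} (G : SimpleGraph V) (u v : V) (k : ℕ) : Prop :=
  ∃ P : Fin k → G.Walk u v, (∀ i, (P i).IsPath) ∧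
    Pairwise fun i j => InternallyDisjoint (P i) (P j)

/-- `IsConstructionOrder k G l` : the list `l` enumerates the edges of `G` without
repetition, and each edge joins two vertices between which the graph formed by the
previous edges has at most `k - 1` internally vertex-disjoint paths. -/
def IsConstructionOrder {V : Type*} [DecidableEq V] (k : ℕ) (G : SimpleGraph V)
    (l : List (Sym2 V)) : Prop :=
  l.Nodup ∧ (↑l.toFinset : Set (Sym2 V)) = G.edgeSet ∧
  ∀ (i : ℕ) (h : i < l.length) (u v : V), l.get ⟨i, h⟩ = s(u, v) →
    ¬ HasDisjointPaths (SimpleGraph.fromEdgeSet (↑(l.take i).toFinset)) u v k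

/-- A graph is `k`-constructible if it admits a `k`-construction order of its edges. -/
def IsKConstructible {V : Type*} [DecidableEq V] (k : ℕ) (G : SimpleGraph V) : Prop :=
  ∃ l : List (Sym2 V), IsConstructionOrder k G l

/-- A graph is `k`-(vertex-)connected: it has more than `k` vertices and deleting any
fewer than `k` vertices leaves a connected graph. -/
def IsKConnectedGraph {V : Type*} [Fintype V] [DecidableEq V]
    (k : ℕ) (G : SimpleGraph V) : Prop :=
  k < Fintype.card V ∧
  ∀ S : Finset V, S.card < k → (G.induce ((↑S : Set V)ᶜ)).Connected

/-- A graph is `k`-minimal if it is `k`-connected and deleting any single edge destroys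
`k`-connectivity. -/
def IsKMinimal {V : Type*} [Fintype V] [DecidableEq V]
    (k : ℕ) (G : SimpleGraph V) : Prop :=
  IsKConnectedGraph k G ∧ ∀ e ∈ G.edgeSet, ¬ IsKConnectedGraph k (G.deleteEdges {e})

/-!
Fix `V'` with `|V'| = k` and order the edges first by their number of endpoints outside `V'`,
then by an injective rank. In a spanning tree of a vertex set `S` containing some `p ∈ V'`,
every vertex of `S \ V'` lies on an edge, so at least `|S \ V'|` edge ends lie outside `V'`;
the star at `p` attains this bound, hence so does every minimum spanning tree. Then every vertex
of `S \ V'` is a leaf, so no tree edge has both ends outside `V'`: they would form a component.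

Conversely, deleting `V' \ {u}` forces the tree edge at an outside vertex `v` to be `uv`, and
deleting `V' \ {u, v}` together with one outside vertex forces `uv` as well, because `|S| - 2`
outside ends cannot cover `|S| - 1` edges. So `M_k(G) = E₂ ∪ E₁`, of size `C(n, 2) - C(n - k, 2)`.
-/

open Finset

section

variable {V : Type*}

lemma SimpleGraph.Reachable.mem_of_adj_closed {G : SimpleGraph V} {C : Set V}
    (hC : ∀ a ∈ C, ∀ b, G.Adj a b → b ∈ C) {a b : V} (h : G.Reachable a b) (ha : a ∈ C) :
    b ∈ C := by
  obtain ⟨p⟩ := h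
  induction p with
  | nil => exact ha
  | cons hadj _ ih => exact ih (hC _ ha _ hadj)

lemma SimpleGraph.exists_mem_of_reachable_fromEdgeSet {s : Set (Sym2 V)} {u v : V}
    (h : (fromEdgeSet s).Reachable u v) (huv : u ≠ v) : ∃ e ∈ s, u ∈ e := by
  obtain ⟨p⟩ := h
  cases p with
  | nil => exact absurd rfl huv
  | cons hadj _ => exact ⟨_, ((fromEdgeSet_adj _).1 hadj).1, Sym2.mem_mk_left _ _⟩

lemma Sym2.mem_image_offDiag_iff [DecidableEq V] {s : Finset V} {e : Sym2 V} :
    e ∈ s.offDiag.image Sym2.mk.uncurry ↔ ¬ e.IsDiag ∧ ∀ v ∈ e, v ∈ s := by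
  induction e using Sym2.ind with
  | _ a b =>
    simp only [mem_image, mem_offDiag, Prod.exists, Function.uncurry_apply_pair, Sym2.eq_iff,
      Sym2.mk_isDiag_iff, Sym2.mem_iff, forall_eq_or_imp, forall_eq]
    aesop

lemma Finset.sum_le_sum_of_sum_add_mul_le {ι : Type*} {s t : Finset ι} {f g : ι → ℕ} {B : ℕ}
    (hg : ∑ i ∈ t, g i < B) (h : ∑ i ∈ s, (g i + f i * B) ≤ ∑ i ∈ t, (g i + f i * B)) :
    ∑ i ∈ s, f i ≤ ∑ i ∈ t, f i := by
  simp only [sum_add_distrib, ← sum_mul] at h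
  have : (∑ i ∈ s, f i) * B < (∑ i ∈ t, f i + 1) * B := by rw [add_mul, one_mul]; omega
  exact Nat.lt_succ_iff.mp (Nat.lt_of_mul_lt_mul_right this)

lemma Nat.choose_two_add_mul (m k : ℕ) :
    m.choose 2 + (m + k) * k = (m + k).choose 2 + (k + 1).choose 2 := by
  induction k with
  | zero => simp
  | succ k ih =>
    rw [← add_assoc, Nat.choose_succ_succ' (m + k), Nat.choose_succ_succ' (k + 1),
      Nat.choose_one_right, Nat.choose_one_right]
    nlinarith [ih]

lemma Nat.choose_two_sub_choose_two {n k : ℕ} (hk : k ≤ n) :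
    n.choose 2 - (n - k).choose 2 = n * k - k * (k + 1) / 2 := by
  obtain ⟨m, rfl⟩ := Nat.exists_eq_add_of_le' hk
  have htri : k * (k + 1) / 2 = (k + 1).choose 2 := by
    rw [Nat.choose_two_right, Nat.add_sub_cancel, mul_comm]
  rw [Nat.add_sub_cancel, htri]
  have := Nat.choose_two_add_mul m k
  omega

variable [Fintype V]

noncomputable def edgeRank (e : Sym2 V) : ℕ := Fintype.equivFin (Sym2 V) e + 1

variable (V) in
noncomputable def rankBound : ℕ :=
  ∑ e : Sym2 V, edgeRank e + 1

lemma sum_edgeRank_lt_rankBound (T : Finset (Sym2 V)) : ∑ e ∈ T, edgeRank e < rankBound V :=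
  Nat.lt_succ_of_le (sum_le_sum_of_subset (subset_univ T))

variable [DecidableEq V] {S V' : Finset V} {T : Finset (Sym2 V)} {p : V}

def outsideEnds (V' : Finset V) (e : Sym2 V) : ℕ := #{v ∈ V'ᶜ | v ∈ e}

lemma outsideEnds_pos_iff {e : Sym2 V} : 0 < outsideEnds V' e ↔ ∃ v ∈ e, v ∉ V' := by
  simp [outsideEnds, card_pos, Finset.Nonempty, and_comm]

lemma outsideEnds_le_one_iff {e : Sym2 V} (he : ¬ e.IsDiag) :
    outsideEnds V' e ≤ 1 ↔ ∃ v ∈ e, v ∈ V' := by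
  induction e using Sym2.ind with
  | _ a b =>
    have hab : a ≠ b := by rwa [Sym2.mk_isDiag_iff] at he
    have : {v ∈ V'ᶜ | v ∈ s(a, b)} = {v ∈ ({a, b} : Finset V) | v ∉ V'} := by
      ext v; simp [Sym2.mem_iff, and_comm]
    rw [outsideEnds, this]
    by_cases ha : a ∈ V' <;> by_cases hb : b ∈ V' <;>
      simp [filter_insert, filter_singleton, ha, hb, hab]

lemma sum_outsideEnds_eq_sum_degree (V' : Finset V) (T : Finset (Sym2 V)) :
    ∑ e ∈ T, outsideEnds V' e = ∑ v ∈ V'ᶜ, #{e ∈ T | v ∈ e} :=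
  sum_card_bipartiteAbove_eq_sum_card_bipartiteBelow _

lemma sum_degree_le_sum_outsideEnds (S V' : Finset V) (T : Finset (Sym2 V)) :
    ∑ v ∈ S with v ∉ V', #{e ∈ T | v ∈ e} ≤ ∑ e ∈ T, outsideEnds V' e := by
  rw [sum_outsideEnds_eq_sum_degree]
  exact sum_le_sum_of_subset fun v hv => mem_compl.2 (mem_filter.1 hv).2

lemma IsSpanningTreeOn.one_le_degree (hT : IsSpanningTreeOn S T) (hp : p ∈ S)
    (hpV' : p ∈ V') : ∀ v ∈ ({v ∈ S | v ∉ V'} : Finset V), 1 ≤ #{e ∈ T | v ∈ e} := by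
  intro v hv
  obtain ⟨hvS, hvV'⟩ := mem_filter.1 hv
  obtain ⟨e, he, hve⟩ := SimpleGraph.exists_mem_of_reachable_fromEdgeSet (hT.2.1 v hvS p hp)
    (by rintro rfl; exact hvV' hpV')
  exact card_pos.2 ⟨e, mem_filter.2 ⟨he, hve⟩⟩

lemma IsSpanningTreeOn.degree_eq_one_of_sum_le (hT : IsSpanningTreeOn S T) (hp : p ∈ S)
    (hpV' : p ∈ V') (hsum : ∑ e ∈ T, outsideEnds V' e ≤ #{v ∈ S | v ∉ V'}) {v : V} (hv : v ∈ S)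
    (hvV' : v ∉ V') : #{e ∈ T | v ∈ e} = 1 := by
  have hle := hT.one_le_degree hp hpV'
  have hsum' : ∑ v ∈ S with v ∉ V', #{e ∈ T | v ∈ e} ≤ ∑ v ∈ S with v ∉ V', 1 := by
    rw [← card_eq_sum_ones]
    exact (sum_degree_le_sum_outsideEnds S V' T).trans hsum
  exact ((sum_eq_sum_iff_of_le hle).1 (le_antisymm (sum_le_sum hle) hsum') v
    (mem_filter.2 ⟨hv, hvV'⟩)).symm

lemma IsSpanningTreeOn.outsideEnds_le_one_of_sum_le (hT : IsSpanningTreeOn S T) (hp : p ∈ S)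
    (hpV' : p ∈ V') (hsum : ∑ e ∈ T, outsideEnds V' e ≤ #{v ∈ S | v ∉ V'}) {e : Sym2 V}
    (he : e ∈ T) : outsideEnds V' e ≤ 1 := by
  rw [outsideEnds_le_one_iff (hT.1 e he).1]
  by_contra! hout
  have honly : ∀ z ∈ e, ∀ f ∈ T, z ∈ f → f = e := fun z hz f hf hzf =>
    card_le_one.1 (hT.degree_eq_one_of_sum_le hp hpV' hsum ((hT.1 e he).2 z hz) (hout z hz)).le
      f (mem_filter.2 ⟨hf, hzf⟩) e (mem_filter.2 ⟨he, hz⟩)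
  have hclosed : ∀ a ∈ {z | z ∈ e}, ∀ b, (SimpleGraph.fromEdgeSet ↑T).Adj a b →
      b ∈ {z | z ∈ e} := by
    intro a ha b hab
    rw [SimpleGraph.fromEdgeSet_adj] at hab
    rw [Set.mem_ofPred_eq, ← honly a ha _ hab.1 (Sym2.mem_mk_left a b)]
    exact Sym2.mem_mk_right a b
  have hx := Sym2.out_fst_mem e
  exact hout p ((hT.2.1 _ ((hT.1 e he).2 _ hx) p hp).mem_of_adj_closed hclosed hx) hpV'

def starTree (S : Finset V) (p : V) : Finset (Sym2 V) := (S.erase p).image (s(p, ·))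

lemma isSpanningTreeOn_starTree (hp : p ∈ S) : IsSpanningTreeOn S (starTree S p) := by
  have hreach : ∀ u ∈ S, (SimpleGraph.fromEdgeSet ↑(starTree S p)).Reachable p u := by
    intro u hu
    rcases eq_or_ne p u with rfl | hpu
    · exact SimpleGraph.Reachable.refl _
    · exact SimpleGraph.Adj.reachable ((SimpleGraph.fromEdgeSet_adj _).2
        ⟨mem_image_of_mem _ (mem_erase.2 ⟨hpu.symm, hu⟩), hpu⟩)
  refine ⟨?_, fun u hu v hv => (hreach u hu).symm.trans (hreach v hv), ?_⟩
  · simp only [starTree, mem_image, mem_erase]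
    rintro _ ⟨x, ⟨hxp, hx⟩, rfl⟩
    refine ⟨by simpa [Sym2.mk_isDiag_iff] using hxp.symm, fun v hv => ?_⟩
    rcases Sym2.mem_iff.1 hv with rfl | rfl <;> assumption
  · rw [starTree, card_image_of_injective _ fun _ _ => Sym2.congr_right.1, card_erase_of_mem hp,
      Nat.sub_add_cancel (card_pos.2 ⟨p, hp⟩)]

lemma sum_outsideEnds_starTree (hpV' : p ∈ V') :
    ∑ e ∈ starTree S p, outsideEnds V' e = #{v ∈ S | v ∉ V'} := by
  have hterm : ∀ x, outsideEnds V' s(p, x) = if x ∉ V' then 1 else 0 := by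
    intro x
    have : {v ∈ V'ᶜ | v ∈ s(p, x)} = {v ∈ V'ᶜ | v = x} := filter_congr fun v hv => by
      simp [Sym2.mem_iff, show v ≠ p by rintro rfl; exact mem_compl.1 hv hpV']
    rw [outsideEnds, this, filter_eq']
    split_ifs <;> simp_all
  rw [starTree, sum_image fun _ _ _ _ => Sym2.congr_right.1]
  simp_rw [hterm]
  rw [← card_filter, filter_erase, erase_eq_of_notMem (by simp [hpV'])]

def IsMinSpanningTreeOn (w : Sym2 V → ℝ) (S : Finset V) (T : Finset (Sym2 V)) : Prop :=
  IsSpanningTreeOn S T ∧ ∀ T', IsSpanningTreeOn S T' → T.sum w ≤ T'.sum w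

lemma mem_mstEdges_iff {w : Sym2 V → ℝ} {e : Sym2 V} :
    e ∈ mstEdges w S ↔ ∃ T, IsMinSpanningTreeOn w S T ∧ e ∈ T := by
  simp only [mstEdges, IsMinSpanningTreeOn, Set.mem_ofPred_eq, and_assoc]

lemma exists_isMinSpanningTreeOn (w : Sym2 V → ℝ) (hp : p ∈ S) :
    ∃ T, IsMinSpanningTreeOn w S T := by
  obtain ⟨T, hT, hmin⟩ := Set.exists_min_image {T | IsSpanningTreeOn S T} (fun T => T.sum w)
    (Set.toFinite _) ⟨_, isSpanningTreeOn_starTree hp⟩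
  exact ⟨T, hT, hmin⟩

-- The paper's weights: `outsideEnds V'` is `0, 1, 2` on `E₂, E₁, E₀`, and `rankBound V` exceeds
-- every sum of ranks, so the rank only breaks ties within a layer.
noncomputable def layeredWeight (V' : Finset V) (e : Sym2 V) : ℕ :=
  edgeRank e + outsideEnds V' e * rankBound V

lemma layeredWeight_pos (V' : Finset V) (e : Sym2 V) : 0 < layeredWeight V' e :=
  Nat.add_pos_left (Nat.succ_pos _) _

lemma layeredWeight_injective (V' : Finset V) : Function.Injective (layeredWeight V') := by
  intro e f h
  have hmod := congrArg (· % rankBound V) h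
  simp only [layeredWeight, Nat.add_mul_mod_self_right] at hmod
  rw [Nat.mod_eq_of_lt (by simpa using sum_edgeRank_lt_rankBound {e}),
    Nat.mod_eq_of_lt (by simpa using sum_edgeRank_lt_rankBound {f})] at hmod
  exact (Fintype.equivFin _).injective (Fin.val_injective (Nat.succ_injective hmod))

lemma IsMinSpanningTreeOn.sum_outsideEnds_le
    (hT : IsMinSpanningTreeOn (fun e => (layeredWeight V' e : ℝ)) S T) (hp : p ∈ S)
    (hpV' : p ∈ V') : ∑ e ∈ T, outsideEnds V' e ≤ #{v ∈ S | v ∉ V'} := by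
  rw [← sum_outsideEnds_starTree hpV']
  refine sum_le_sum_of_sum_add_mul_le (sum_edgeRank_lt_rankBound _) ?_
  exact_mod_cast hT.2 _ (isSpanningTreeOn_starTree hp)

lemma IsMinSpanningTreeOn.outsideEnds_le_one
    (hT : IsMinSpanningTreeOn (fun e => (layeredWeight V' e : ℝ)) S T) (hp : p ∈ S)
    (hpV' : p ∈ V') {e : Sym2 V} (he : e ∈ T) : outsideEnds V' e ≤ 1 :=
  hT.1.outsideEnds_le_one_of_sum_le hp hpV' (hT.sum_outsideEnds_le hp hpV') he

lemma IsMinSpanningTreeOn.mk_mem_of_inter_subset_singleton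
    (hT : IsMinSpanningTreeOn (fun e => (layeredWeight V' e : ℝ)) S T) {u v : V} (hu : u ∈ S)
    (huV' : u ∈ V') (hSV' : ∀ z ∈ S, z ∈ V' → z = u) (hv : v ∈ S) (hvV' : v ∉ V') :
    s(u, v) ∈ T := by
  obtain ⟨e, he, hve⟩ := SimpleGraph.exists_mem_of_reachable_fromEdgeSet (hT.1.2.1 v hv u hu)
    (by rintro rfl; exact hvV' huV')
  obtain ⟨hdiag, hS⟩ := hT.1.1 e he
  obtain ⟨z, hz, hzV'⟩ := (outsideEnds_le_one_iff hdiag).1 (hT.outsideEnds_le_one hu huV' he)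
  obtain ⟨y, rfl⟩ := Sym2.mem_iff_exists.1 hve
  rcases Sym2.mem_iff.1 hz with rfl | rfl
  · exact absurd hzV' hvV'
  · rwa [hSV' z (hS z hz) hzV', Sym2.eq_swap] at he

lemma IsMinSpanningTreeOn.mk_mem_of_inter_subset_pair
    (hT : IsMinSpanningTreeOn (fun e => (layeredWeight V' e : ℝ)) S T) {u v : V} (hu : u ∈ S)
    (huV' : u ∈ V') (hv : v ∈ S) (hvV' : v ∈ V') (huv : u ≠ v)
    (hSV' : ∀ z ∈ S, z ∈ V' → z = u ∨ z = v) : s(u, v) ∈ T := by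
  by_contra huvT
  have hpos : ∀ e ∈ T, 1 ≤ outsideEnds V' e := by
    intro e he
    by_contra! h0
    obtain ⟨hdiag, hS⟩ := hT.1.1 e he
    have hin : ∀ z ∈ e, z ∈ V' := by
      simpa using (outsideEnds_pos_iff (V' := V') (e := e)).not.1 (by omega)
    induction e using Sym2.ind with
    | _ a b =>
      have hab : a ≠ b := by rwa [Sym2.mk_isDiag_iff] at hdiag
      have ha := hSV' a (hS a (Sym2.mem_mk_left a b)) (hin a (Sym2.mem_mk_left a b))
      have hb := hSV' b (hS b (Sym2.mem_mk_right a b)) (hin b (Sym2.mem_mk_right a b))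
      rcases ha with rfl | rfl <;> rcases hb with rfl | rfl
      all_goals first | exact hab rfl | exact huvT he | exact huvT (Sym2.eq_swap ▸ he)
  have hinter : ({z ∈ S | ¬ z ∉ V'} : Finset V) = {u, v} := by
    ext z
    simp only [not_not, mem_filter, mem_insert, mem_singleton]
    exact ⟨fun h => hSV' z h.1 h.2, by rintro (rfl | rfl) <;> simp [*]⟩
  have hcardS := card_filter_add_card_filter_not (s := S) (fun z => z ∉ V')
  rw [hinter, card_pair huv] at hcardS
  have hcardT := hT.1.2.2
  have hcardT' : #T ≤ ∑ e ∈ T, outsideEnds V' e := by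
    simpa using card_nsmul_le_sum T _ 1 hpos
  have := hT.sum_outsideEnds_le hu huV'
  omega

lemma exists_mem_of_mem_Mk_layeredWeight {k : ℕ} (hk : #V' = k) (hk1 : 1 ≤ k) {e : Sym2 V}
    (he : e ∈ Mk (fun e => (layeredWeight V' e : ℝ)) k) : ¬ e.IsDiag ∧ ∃ v ∈ e, v ∈ V' := by
  obtain ⟨X, hX, heM⟩ := he
  obtain ⟨T, hT, heT⟩ := mem_mstEdges_iff.1 heM
  obtain ⟨p, hp⟩ : (V' \ X).Nonempty := card_pos.1 (by have := le_card_sdiff X V'; omega)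
  obtain ⟨hpV', hpX⟩ := mem_sdiff.1 hp
  have hdiag := (hT.1.1 e heT).1
  exact ⟨hdiag, (outsideEnds_le_one_iff hdiag).1
    (hT.outsideEnds_le_one (mem_sdiff.2 ⟨mem_univ p, hpX⟩) hpV' heT)⟩

lemma mk_mem_Mk_layeredWeight_of_notMem {k : ℕ} (hk : #V' = k) {u v : V} (hu : u ∈ V')
    (hv : v ∉ V') : s(u, v) ∈ Mk (fun e => (layeredWeight V' e : ℝ)) k := by
  have huS : u ∈ univ \ V'.erase u := by simp
  obtain ⟨T, hT⟩ := exists_isMinSpanningTreeOn (fun e => (layeredWeight V' e : ℝ)) huS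
  refine ⟨V'.erase u, by rw [card_erase_of_mem hu, hk], mem_mstEdges_iff.2 ⟨T, hT, ?_⟩⟩
  exact hT.mk_mem_of_inter_subset_singleton huS hu (fun z hz hzV' => by simp_all)
    (by simp [hv]) hv

lemma mk_mem_Mk_layeredWeight_of_mem {k : ℕ} (hk : #V' = k) (hkn : k < Fintype.card V)
    {u v : V} (hu : u ∈ V') (hv : v ∈ V') (huv : u ≠ v) :
    s(u, v) ∈ Mk (fun e => (layeredWeight V' e : ℝ)) k := by
  obtain ⟨q, hq⟩ : V'ᶜ.Nonempty := card_pos.1 (by rw [card_compl]; omega)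
  rw [mem_compl] at hq
  have hk2 : 2 ≤ k := hk ▸ one_lt_card.2 ⟨u, hu, v, hv, huv⟩
  -- Deleting `q` as well keeps `|X| = k - 1` while `u` and `v` are the only survivors in `V'`.
  set X := insert q ((V'.erase u).erase v)
  have hXcard : #X = k - 1 := by
    rw [card_insert_of_notMem (by simp [hq]), card_erase_of_mem (by simp [hv, huv.symm]),
      card_erase_of_mem hu, hk]
    omega
  have huS : u ∈ univ \ X := by simp [X, huv, ne_of_mem_of_not_mem hu hq]
  have hvS : v ∈ univ \ X := by simp [X, ne_of_mem_of_not_mem hv hq]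
  obtain ⟨T, hT⟩ := exists_isMinSpanningTreeOn (fun e => (layeredWeight V' e : ℝ)) huS
  refine ⟨X, hXcard, mem_mstEdges_iff.2 ⟨T, hT, ?_⟩⟩
  exact hT.mk_mem_of_inter_subset_pair huS hu hvS hv huv fun z hz hzV' => by
    simp [X] at hz
    tauto

lemma Mk_layeredWeight_eq {k : ℕ} (hk : #V' = k) (hk1 : 1 ≤ k) (hkn : k < Fintype.card V) :
    Mk (fun e => (layeredWeight V' e : ℝ)) k =
      ↑(univ.offDiag.image Sym2.mk.uncurry \ V'ᶜ.offDiag.image Sym2.mk.uncurry) := by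
  ext e
  simp only [coe_sdiff, Set.mem_sdiff, mem_coe, Sym2.mem_image_offDiag_iff, mem_univ, mem_compl,
    implies_true, and_true, not_and, not_forall, not_not, exists_prop]
  refine ⟨fun he => ?_, fun ⟨hdiag, hout⟩ => ?_⟩
  · obtain ⟨hdiag, hv⟩ := exists_mem_of_mem_Mk_layeredWeight hk hk1 he
    exact ⟨hdiag, fun _ => hv⟩
  · obtain ⟨u, hue, huV'⟩ := hout hdiag
    obtain ⟨v, rfl⟩ := Sym2.mem_iff_exists.1 hue
    have huv : u ≠ v := by rwa [Sym2.mk_isDiag_iff] at hdiag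
    by_cases hv : v ∈ V'
    · exact mk_mem_Mk_layeredWeight_of_mem hk hkn huV' hv huv
    · exact mk_mem_Mk_layeredWeight_of_notMem hk huV' hv

lemma ncard_Mk_layeredWeight {k : ℕ} (hk : #V' = k) (hk1 : 1 ≤ k) (hkn : k < Fintype.card V) :
    (Mk (fun e => (layeredWeight V' e : ℝ)) k).ncard =
      (Fintype.card V).choose 2 - (Fintype.card V - k).choose 2 := by
  rw [Mk_layeredWeight_eq hk hk1 hkn, Set.ncard_coe_finset,
    card_sdiff_of_subset (image_subset_image (offDiag_mono (subset_univ _))),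
    Sym2.card_image_offDiag, Sym2.card_image_offDiag, card_compl, card_univ, hk]

end

theorem stmt_1_general {V : Type*} [Fintype V] [DecidableEq V]
    (k : ℕ) (hk1 : 1 ≤ k) (hk2 : k ≤ Fintype.card V - 1) :
    ∃ w : Sym2 V → ℝ,
      (∀ e : Sym2 V, ¬ e.IsDiag → 0 < w e) ∧
      (∀ e f : Sym2 V, ¬ e.IsDiag → ¬ f.IsDiag → w e = w f → e = f) ∧
      (Mk w k).ncard = Fintype.card V * k - k * (k + 1) / 2 := by
  obtain ⟨V', -, hV'⟩ :=
    exists_subset_card_eq (show k ≤ #(univ : Finset V) by rw [card_univ]; omega)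
  refine ⟨fun e => layeredWeight V' e, fun e _ => Nat.cast_pos.2 (layeredWeight_pos V' e),
    fun e f _ _ h => layeredWeight_injective V' (Nat.cast_injective h), ?_⟩
  rw [ncard_Mk_layeredWeight hV' hk1 (by omega), Nat.choose_two_sub_choose_two (by omega)]

/-- the bound `nk - k(k+1)/2` is tight: for every `n ≥ 2` and
`k ∈ {1, …, n-1}` there are injective positive edge weights with
`|M_k(G)| = nk - k(k+1)/2`. -/
theorem stmt_1 {V : Type*} [Fintype V] [DecidableEq V]
    (hn : 2 ≤ Fintype.card V) (k : ℕ) (hk1 : 1 ≤ k) (hk2 : k ≤ Fintype.card V - 1) :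
    ∃ w : Sym2 V → ℝ,
      (∀ e : Sym2 V, ¬ e.IsDiag → 0 < w e) ∧
      (∀ e f : Sym2 V, ¬ e.IsDiag → ¬ f.IsDiag → w e = w f → e = f) ∧
      (Mk w k).ncard = Fintype.card V * k - k * (k + 1) / 2 :=
  stmt_1_general k hk1 hk2
end

section
/- For every complete graph G = (V, E) on n vertices with distinct positive edge weights and every k ∈ {1, …, n−1}, the graph (V, M_k(G)) is k-constructible. -/
/-!
Insert the edges of `M_k(G)` in order of increasing weight. Suppose the edge `uv`, taken from
`MST(G[V ∖ X])` with `|X| = k - 1`, already had `k` internally disjoint `u`–`v` paths through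
lighter edges. Each vertex of `X` lies on at most one of them, so one path avoids `X`: it runs
inside `G[V ∖ X]` through edges lighter than `uv`. This contradicts the cycle property of
minimum spanning trees: the path crosses the cut that `uv` spans in the tree, and exchanging
`uv` for the crossing edge yields a lighter spanning tree.
-/

open Finset SimpleGraph

section

variable {V : Type*}

lemma HasDisjointPaths.mono {G H : SimpleGraph V} (hGH : G ≤ H) {u v : V} {k : ℕ}
    (h : HasDisjointPaths G u v k) : HasDisjointPaths H u v k := by
  obtain ⟨P, hP, hdisj⟩ := h
  refine ⟨fun i => (P i).mapLe hGH, fun i => (hP i).mapLe hGH, fun i j hij x hi hj => ?_⟩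
  rw [Walk.support_mapLe_eq_support] at hi hj
  exact hdisj hij x hi hj

namespace SimpleGraph

lemma Reachable.deleteEdges_or {G : SimpleGraph V} {x u v : V} (h : G.Reachable x u) :
    (G.deleteEdges {s(u, v)}).Reachable x u ∨ (G.deleteEdges {s(u, v)}).Reachable x v := by
  obtain ⟨p⟩ := h
  induction p with
  | nil => exact Or.inl .rfl
  | @cons a b c hab q ih =>
    by_cases he : s(a, b) = s(c, v)
    · rcases Sym2.eq_iff.1 he with ⟨rfl, -⟩ | ⟨rfl, -⟩
      · exact Or.inl .rfl
      · exact Or.inr .rfl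
    · have hadj : (G.deleteEdges {s(c, v)}).Adj a b := by simp [hab, he]
      exact ih.imp hadj.reachable.trans hadj.reachable.trans

lemma mk_notMem_of_reachable_of_not_reachable {F : Set (Sym2 V)} {u a b : V}
    (ha : (fromEdgeSet F).Reachable u a) (hb : ¬ (fromEdgeSet F).Reachable u b) :
    s(a, b) ∉ F := by
  intro hab
  obtain rfl | hne := eq_or_ne a b
  · exact hb ha
  · exact hb (ha.trans (Adj.reachable (by simp [hab, hne])))

lemma card_le_card_add_one_of_reachable {F : Finset (Sym2 V)} {S : Finset V}
    (hF : ∀ e ∈ F, ∀ v ∈ e, v ∈ S)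
    (hS : ∀ u ∈ S, ∀ v ∈ S, (fromEdgeSet (F : Set (Sym2 V))).Reachable u v) :
    #S ≤ #F + 1 := by
  obtain rfl | ⟨u, hu⟩ := S.eq_empty_or_nonempty
  · simp
  set G := fromEdgeSet (F : Set (Sym2 V))
  have hsupp {x y : V} (p : G.Walk x y) (hy : y ∈ S) : ∀ z ∈ p.support, z ∈ S := by
    intro z hz
    rcases Walk.mem_support_iff_exists_mem_edges.1 hz with rfl | ⟨e, he, hze⟩
    · exact hy
    · have he := p.edges_subset_edgeSet he
      rw [edgeSet_fromEdgeSet] at he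
      exact hF e he.1 z hze
  have hconn : (G.induce (S : Set V)).Connected :=
    induce_connected_of_patches u hu fun {v} hv => by
      obtain ⟨p⟩ := hS u hu v hv
      exact ⟨_, hsupp p hv, p.start_mem_support, p.end_mem_support,
        p.connected_induce_support.preconnected _ _⟩
  have hedges : G.edgeSet ⊆ F := by simp [G, edgeSet_fromEdgeSet]
  have : Finite G.edgeSet := (F.finite_toSet.subset hedges).to_subtype
  calc #S = Nat.card (S : Set V) := by simp
    _ ≤ Nat.card (G.induce (S : Set V)).edgeSet + 1 := hconn.card_vert_le_card_edgeSet_add_one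
    _ ≤ Nat.card G.edgeSet + 1 := by
      gcongr
      exact Nat.card_le_card_of_injective _ (Embedding.induce _).mapEdgeSet.injective
    _ ≤ #F + 1 := by
      gcongr
      exact (Nat.card_mono F.finite_toSet hedges).trans (by simp)

lemma exists_forall_support_notMem_of_card_lt {G : SimpleGraph V} {u v : V} {k : ℕ}
    {P : Fin k → G.Walk u v} (hP : Pairwise fun i j => InternallyDisjoint (P i) (P j))
    {X : Finset V} (hu : u ∉ X) (hv : v ∉ X) (hX : #X < k) :
    ∃ i, ∀ x ∈ (P i).support, x ∉ X := by
  classical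
  set B := X.biUnion fun x => univ.filter fun i => x ∈ (P i).support
  have hB : #B < #(univ : Finset (Fin k)) :=
    calc #B ≤ ∑ x ∈ X, #(univ.filter fun i => x ∈ (P i).support) := card_biUnion_le
      _ ≤ ∑ _x ∈ X, 1 := by
        refine sum_le_sum fun x hx => card_le_one.2 fun i hi j hj => ?_
        by_contra hij
        rcases hP hij x (mem_filter.1 hi).2 (mem_filter.1 hj).2 with rfl | rfl
        exacts [hu hx, hv hx]
      _ < #(univ : Finset (Fin k)) := by simpa using hX
  obtain ⟨i, -, hi⟩ := exists_mem_notMem_of_card_lt_card hB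
  exact ⟨i, fun x hx hxX => hi (mem_biUnion.2 ⟨x, hxX, by simp [hx]⟩)⟩

theorem isKConstructible_of_not_hasDisjointPaths_lighter [DecidableEq V] {G : SimpleGraph V}
    [Fintype G.edgeSet] {k : ℕ} (w : Sym2 V → ℝ) (hw : Set.InjOn w G.edgeSet)
    (h : ∀ u v, G.Adj u v → ¬ HasDisjointPaths (fromEdgeSet {f | w f < w s(u, v)}) u v k) :
    IsKConstructible k G := by
  set l := G.edgeFinset.toList.mergeSort fun a b => decide (w a ≤ w b)
  have hperm : l.Perm G.edgeFinset.toList := List.mergeSort_perm _ _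
  have hsorted : l.Pairwise fun a b => w a ≤ w b := by
    simpa using List.pairwise_mergeSort (le := fun a b => decide (w a ≤ w b))
      (by simpa using fun _ _ _ => le_trans) (by simpa using fun a b => le_total (w a) (w b)) _
  have hmem : ∀ e, e ∈ l ↔ e ∈ G.edgeSet := fun e => by
    rw [hperm.mem_iff, mem_toList, mem_edgeFinset]
  have hnodup : l.Nodup := hperm.nodup_iff.2 (nodup_toList _)
  refine ⟨l, hnodup, Set.ext fun e => by simpa using hmem e, fun i hi u v huv hpaths => ?_⟩
  have hi' : l[i] ∈ l.drop i := by
    rw [List.drop_eq_getElem_cons hi]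
    exact List.mem_cons_self
  refine h u v ?_ (.mono (fromEdgeSet_mono fun f hf => ?_) hpaths)
  · rw [← mem_edgeSet, ← huv, ← hmem]
    exact List.get_mem _ _
  · have hf : f ∈ l.take i := by simpa using hf
    have hne : f ≠ l[i] := fun h => List.disjoint_take_drop hnodup le_rfl hf (h ▸ hi')
    have hfe : f ∈ G.edgeSet ∧ l[i] ∈ G.edgeSet :=
      ⟨(hmem f).1 (List.mem_of_mem_take hf), (hmem _).1 (List.getElem_mem hi)⟩
    change l[i] = s(u, v) at huv
    rw [← huv]
    exact (hsorted.rel_of_mem_take_of_mem_drop hf hi').lt_of_ne fun h => hne (hw hfe.1 hfe.2 h)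

end SimpleGraph

namespace IsSpanningTreeOn

variable [Fintype V] [DecidableEq V] {S : Finset V} {T : Finset (Sym2 V)} {u v : V}

lemma mem_of_mem (hT : IsSpanningTreeOn S T) {e : Sym2 V} (he : e ∈ T) {x : V} (hx : x ∈ e) :
    x ∈ S :=
  (hT.1 e he).2 x hx

lemma reachable_erase_or (hT : IsSpanningTreeOn S T) (hu : u ∈ S) {x : V} (hx : x ∈ S) :
    (fromEdgeSet ↑(T.erase s(u, v))).Reachable x u ∨
      (fromEdgeSet ↑(T.erase s(u, v))).Reachable x v := by
  have : fromEdgeSet ↑(T.erase s(u, v)) =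
      (fromEdgeSet (T : Set (Sym2 V))).deleteEdges {s(u, v)} := by
    ext a b
    simp
  rw [this]
  exact (hT.2.1 x hx u hu).deleteEdges_or

lemma not_reachable_erase (hT : IsSpanningTreeOn S T) (he : s(u, v) ∈ T) :
    ¬ (fromEdgeSet ↑(T.erase s(u, v))).Reachable u v := by
  intro huv
  have hu : u ∈ S := hT.mem_of_mem he (Sym2.mem_mk_left u v)
  have hxu : ∀ x ∈ S, (fromEdgeSet ↑(T.erase s(u, v))).Reachable x u := fun x hx =>
    (hT.reachable_erase_or hu hx).elim id (·.trans huv.symm)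
  have := card_le_card_add_one_of_reachable (fun f hf _ => hT.mem_of_mem (mem_of_mem_erase hf))
    fun x hx y hy => (hxu x hx).trans (hxu y hy).symm
  have := card_erase_of_mem he
  have := card_pos.2 ⟨_, he⟩
  have := hT.2.2
  omega

lemma insert_erase (hT : IsSpanningTreeOn S T) (he : s(u, v) ∈ T) {a b : V} (hab : a ≠ b)
    (ha : a ∈ S) (hb : b ∈ S) (hua : (fromEdgeSet ↑(T.erase s(u, v))).Reachable u a)
    (hub : ¬ (fromEdgeSet ↑(T.erase s(u, v))).Reachable u b) :
    IsSpanningTreeOn S (insert s(a, b) (T.erase s(u, v))) := by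
  set G₀ := fromEdgeSet (↑(T.erase s(u, v)) : Set (Sym2 V))
  set G := fromEdgeSet (↑(insert s(a, b) (T.erase s(u, v))) : Set (Sym2 V))
  have hle : G₀ ≤ G := fromEdgeSet_mono (coe_subset.2 (subset_insert _ _))
  have hu : u ∈ S := hT.mem_of_mem he (Sym2.mem_mk_left u v)
  have hbv : G₀.Reachable b v := (hT.reachable_erase_or hu hb).resolve_left fun h => hub h.symm
  have hab' : G.Adj a b := by simp [G, hab]
  have hvu : G.Reachable v u :=
    ((hbv.mono hle).symm.trans hab'.reachable.symm).trans (hua.mono hle).symm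
  have hxu : ∀ x ∈ S, G.Reachable x u := fun x hx =>
    (hT.reachable_erase_or hu hx).elim (·.mono hle) fun h => (h.mono hle).trans hvu
  refine ⟨fun f hf => ?_, fun x hx y hy => (hxu x hx).trans (hxu y hy).symm, ?_⟩
  · obtain rfl | hf := mem_insert.1 hf
    · exact ⟨by simpa using hab, by simp [ha, hb]⟩
    · exact hT.1 f (mem_of_mem_erase hf)
  · rw [card_insert_of_notMem (by exact_mod_cast mk_notMem_of_reachable_of_not_reachable hua hub),
      card_erase_of_mem he]
    have := card_pos.2 ⟨_, he⟩
    have := hT.2.2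
    omega

end IsSpanningTreeOn

section mstEdges

variable [Fintype V] [DecidableEq V] {w : Sym2 V → ℝ} {S : Finset V}

lemma mem_of_mem_mstEdges {e : Sym2 V} (he : e ∈ mstEdges w S) {x : V} (hx : x ∈ e) :
    x ∈ S := by
  obtain ⟨T, hT, -, heT⟩ := he
  exact hT.mem_of_mem heT hx

theorem exists_mem_edges_le_of_mem_mstEdges {u v : V} (he : s(u, v) ∈ mstEdges w S)
    {G : SimpleGraph V} (p : G.Walk u v) (hp : ∀ x ∈ p.support, x ∈ S) :
    ∃ f ∈ p.edges, w s(u, v) ≤ w f := by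
  obtain ⟨T, hT, hmin, heT⟩ := he
  by_contra! hlt
  set G₀ := fromEdgeSet (↑(T.erase s(u, v)) : Set (Sym2 V))
  obtain ⟨d, hd, hua, hub⟩ :=
    p.exists_boundary_dart {x | G₀.Reachable u x} .rfl (hT.not_reachable_erase heT)
  have hnew : s(d.fst, d.snd) ∉ T.erase s(u, v) := by
    exact_mod_cast mk_notMem_of_reachable_of_not_reachable hua hub
  have hT' := hT.insert_erase heT d.adj.ne (hp _ (p.dart_fst_mem_support_of_mem_darts hd))
    (hp _ (p.dart_snd_mem_support_of_mem_darts hd)) hua hub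
  have hlight : w s(d.fst, d.snd) < w s(u, v) := hlt _ (List.mem_map_of_mem hd)
  have := hmin _ hT'
  rw [sum_insert hnew] at this
  linarith [sum_erase_add T w heT]

end mstEdges

end

theorem stmt_5_general {V : Type*} [Fintype V] [DecidableEq V] (w : Sym2 V → ℝ)
    (hinj : ∀ e f : Sym2 V, ¬ e.IsDiag → ¬ f.IsDiag → w e = w f → e = f)
    (k : ℕ) (hk1 : 1 ≤ k) :
    IsKConstructible k (SimpleGraph.fromEdgeSet (Mk w k)) := by
  classical
  refine isKConstructible_of_not_hasDisjointPaths_lighter w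
    (fun e he f hf => hinj e f (not_isDiag_of_mem_edgeSet _ he) (not_isDiag_of_mem_edgeSet _ hf))
    fun u v huv ⟨P, _, hdisj⟩ => ?_
  obtain ⟨X, hX, he⟩ : s(u, v) ∈ Mk w k := ((fromEdgeSet_adj _).1 huv).1
  have hS {x : V} (hx : x ∈ s(u, v)) : x ∉ X := (mem_sdiff.1 (mem_of_mem_mstEdges he hx)).2
  obtain ⟨i, hi⟩ := exists_forall_support_notMem_of_card_lt hdisj
    (hS (Sym2.mem_mk_left u v)) (hS (Sym2.mem_mk_right u v)) (by omega)
  obtain ⟨f, hf, hle⟩ :=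
    exists_mem_edges_le_of_mem_mstEdges he (P i) fun x hx => by simpa using hi x hx
  have hf := (P i).edges_subset_edgeSet hf
  rw [edgeSet_fromEdgeSet] at hf
  exact hle.not_gt hf.1

/-- for every complete graph with distinct positive edge weights and
every `k ∈ {1, …, n-1}`, the graph `(V, M_k(G))` is `k`-constructible. -/
theorem stmt_5 {V : Type*} [Fintype V] [DecidableEq V] (w : Sym2 V → ℝ)
    (hpos : ∀ e : Sym2 V, ¬ e.IsDiag → 0 < w e)
    (hinj : ∀ e f : Sym2 V, ¬ e.IsDiag → ¬ f.IsDiag → w e = w f → e = f)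
    (k : ℕ) (hk1 : 1 ≤ k) (hk2 : k ≤ Fintype.card V - 1) :
    IsKConstructible k (SimpleGraph.fromEdgeSet (Mk w k)) :=
  stmt_5_general w hinj k hk1
end

section
/- Let G = (V, E) be a k-constructible graph. Then there exists an injective positive edge-weight function on the complete graph G̃ on the vertex set V such that E ⊆ M_k(G̃). -/
/-!
Weight the edges by their position in a `k`-construction order, placing all other pairs after
them. When `e_i = uv` is added, the edges lighter than `uv` are exactly `e_1, …, e_{i-1}`, and
they carry fewer than `k` internally disjoint `u`–`v` paths; by Menger's theorem some `k - 1`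
vertices other than `u, v` meet every `u`–`v` path in them. After deleting these vertices from
`G̃` no path of edges lighter than `uv` joins `u` and `v`, so by the cycle property `uv` lies in
the minimum spanning tree of what remains.
-/

namespace SimpleGraph

variable {V : Type*} {G H : SimpleGraph V} {A B T : Finset V} {k : ℕ}

theorem Reachable.of_forall_adj (h : ∀ a b, G.Adj a b → H.Reachable a b) {x y : V}
    (hxy : G.Reachable x y) : H.Reachable x y := by
  rw [reachable_eq_reflTransGen] at hxy ⊢
  exact hxy.lift' id fun a b hab => reachable_eq_reflTransGen ▸ h a b hab

theorem Walk.IsPath.eq_of_end_mem_support_takeUntil [DecidableEq V] {a b z : V} {p : G.Walk a b}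
    (hp : p.IsPath) (hz : z ∈ p.support) (hb : b ∈ (p.takeUntil z hz).support) : z = b := by
  have hnd := hp.support_nodup
  rw [← p.take_spec hz, Walk.support_append] at hnd
  have hb' := (p.dropUntil z hz).end_mem_support
  rw [← Walk.cons_tail_support] at hb'
  rcases List.mem_cons.mp hb' with h | h
  · exact h.symm
  · exact absurd h (List.disjoint_of_nodup_append hnd hb)

theorem Walk.exists_isPath_to_first_mem {a b : V} (p : G.Walk a b) (S : Set V)
    (h : ∃ z ∈ p.support, z ∈ S) :
    ∃ s ∈ S, ∃ q : G.Walk a s, q.IsPath ∧ q.support ⊆ p.support ∧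
      ∀ z ∈ q.support, z ∈ S → z = s := by
  classical
  suffices ∃ s ∈ S, ∃ q : G.Walk a s, q.support ⊆ p.support ∧
      ∀ z ∈ q.support, z ∈ S → z = s by
    obtain ⟨s, hs, q, hsub, hfirst⟩ := this
    exact ⟨s, hs, q.toPath, q.toPath.2, fun z hz => hsub (q.support_toPath_subset_support hz),
      fun z hz => hfirst z (q.support_toPath_subset_support hz)⟩
  induction p with
  | nil =>
    obtain ⟨z, hz, hzS⟩ := h
    rw [Walk.support_nil, List.mem_singleton] at hz
    exact ⟨_, hz ▸ hzS, .nil, by simp, by simp⟩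
  | @cons u _ _ hadj p ih =>
    by_cases hu : u ∈ S
    · exact ⟨u, hu, .nil, by simp, by simp⟩
    · obtain ⟨s, hs, q, hsub, hfirst⟩ := ih (by simpa [hu] using h)
      refine ⟨s, hs, .cons hadj q, ?_, ?_⟩
      · simpa using List.cons_subset_cons u hsub
      · simp only [Walk.support_cons, List.mem_cons, forall_eq_or_imp]
        exact ⟨fun h => absurd h hu, hfirst⟩

theorem Walk.IsPath.exists_adj_start {a b : V} {p : G.Walk a b} (hp : p.IsPath) (hab : a ≠ b) :
    ∃ c, G.Adj a c ∧ ∃ m : G.Walk c b, m.IsPath ∧ a ∉ m.support ∧ m.support ⊆ p.support := by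
  cases p with
  | nil => exact absurd rfl hab
  | cons h m =>
    rw [Walk.cons_isPath_iff] at hp
    exact ⟨_, h, m, hp.1, hp.2, by simp⟩

theorem Walk.IsPath.exists_interior {u v : V} {p : G.Walk u v} (hp : p.IsPath) (huv : u ≠ v)
    (hadj : ¬ G.Adj u v) : ∃ c d, G.Adj u c ∧ G.Adj v d ∧
      ∃ m : G.Walk c d, u ∉ m.support ∧ v ∉ m.support ∧ m.support ⊆ p.support := by
  obtain ⟨c, huc, m, hm, hum, hmp⟩ := hp.exists_adj_start huv
  have hvc : v ≠ c := fun h => hadj (h ▸ huc)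
  obtain ⟨d, hvd, m', -, hvm', hm'm⟩ := hm.reverse.exists_adj_start hvc
  refine ⟨c, d, huc, hvd, m'.reverse, ?_, by simpa using hvm', ?_⟩
  · simpa using fun h => hum (by simpa using hm'm h)
  · simp only [Walk.support_reverse, List.reverse_subset]
    exact fun z hz => hmp (by simpa using hm'm hz)

def Separates (G : SimpleGraph V) (A B T : Finset V) : Prop :=
  ∀ a ∈ A, ∀ b ∈ B, ∀ p : G.Walk a b, ∃ t ∈ T, t ∈ p.support

def HasVertexDisjointPaths (G : SimpleGraph V) (A B : Finset V) (k : ℕ) : Prop :=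
  ∃ (a b : Fin k → V) (p : ∀ i, G.Walk (a i) (b i)), (∀ i, a i ∈ A) ∧ (∀ i, b i ∈ B) ∧
    (∀ i, (p i).IsPath) ∧ Pairwise fun i j => (p i).support.Disjoint (p j).support

theorem Separates.symm (h : G.Separates A B T) : G.Separates B A T :=
  fun b hb a ha p => by simpa using h a ha b hb p.reverse

theorem Separates.of_le (hle : H ≤ G) (h : G.Separates A B T) : H.Separates A B T :=
  fun a ha b hb p => by simpa using h a ha b hb (p.mapLe hle)

theorem Separates.mono {T' : Finset V} (hT : T ⊆ T') (h : G.Separates A B T) :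
    G.Separates A B T' :=
  fun a ha b hb p => (h a ha b hb p).imp fun _ ht => ⟨hT ht.1, ht.2⟩

theorem HasVertexDisjointPaths.mono (hle : G ≤ H) (h : G.HasVertexDisjointPaths A B k) :
    H.HasVertexDisjointPaths A B k := by
  obtain ⟨a, b, p, ha, hb, hp, hdisj⟩ := h
  exact ⟨a, b, fun i => (p i).mapLe hle, ha, hb, fun i => (hp i).mapLe hle,
    fun i j hij => by simpa using hdisj hij⟩

theorem hasVertexDisjointPaths_of_edgeSet_eq_empty [DecidableEq V] (hE : G.edgeSet = ∅)
    (h : ∀ T, G.Separates A B T → k ≤ T.card) : G.HasVertexDisjointPaths A B k := by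
  have hsep : G.Separates A B (A ∩ B) := by
    intro a ha b hb p
    cases p with
    | nil => exact ⟨a, Finset.mem_inter.mpr ⟨ha, hb⟩, by simp⟩
    | cons hadj _ => exact absurd (G.mem_edgeSet.mpr hadj) (hE ▸ Set.notMem_empty _)
  let f : Fin k ↪ V := ((Fin.castLEEmb (by simpa using h _ hsep)).trans
    (A ∩ B).equivFin.symm.toEmbedding).trans (Function.Embedding.subtype _)
  have hf : ∀ i, f i ∈ A ∩ B := fun i => by simp [f]
  exact ⟨f, f, fun i => .nil, fun i => (Finset.mem_inter.mp (hf i)).1,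
    fun i => (Finset.mem_inter.mp (hf i)).2, fun i => .nil,
    fun i j hij => by simpa using hij.symm⟩

section Contraction

variable [DecidableEq V] {x y : V}

def contractVert (x y : V) (z : V) : V := if z = y then x else z

/-- The vertex `y` is left isolated rather than removed. -/
def contractEdge (G : SimpleGraph V) (x y : V) : SimpleGraph V where
  Adj a b := a ≠ b ∧ ∃ a' b', G.Adj a' b' ∧ contractVert x y a' = a ∧ contractVert x y b' = b
  symm := ⟨fun _ _ ⟨h, a', b', hadj, ha, hb⟩ => ⟨h.symm, b', a', hadj.symm, hb, ha⟩⟩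
  loopless := ⟨fun _ h => h.1 rfl⟩

theorem contractEdge_adj {a b : V} : (G.contractEdge x y).Adj a b ↔
    a ≠ b ∧ ∃ a' b', G.Adj a' b' ∧ contractVert x y a' = a ∧ contractVert x y b' = b :=
  Iff.rfl

theorem exists_walk_of_contractVert_eq (hxy : G.Adj x y) {a b : V}
    (h : contractVert x y a = contractVert x y b) :
    ∃ q : G.Walk a b, ∀ z ∈ q.support, contractVert x y z = contractVert x y a := by
  by_cases hab : a = b
  · subst hab
    exact ⟨.nil, by simp⟩
  have hadj : G.Adj a b := by
    unfold contractVert at h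
    split_ifs at h with ha hb hb
    · exact absurd (ha.trans hb.symm) hab
    · rwa [ha, ← h, adj_comm]
    · rwa [hb, h]
    · exact absurd h hab
  exact ⟨hadj.toWalk, by simp [h]⟩

theorem Walk.exists_map_contractEdge {a b : V} (p : G.Walk a b) :
    ∃ q : (G.contractEdge x y).Walk (contractVert x y a) (contractVert x y b),
      q.support ⊆ p.support.map (contractVert x y) := by
  induction p with
  | nil => exact ⟨.nil, by simp⟩
  | @cons u v _ hadj p ih =>
    obtain ⟨q, hq⟩ := ih
    by_cases h : contractVert x y u = contractVert x y v
    · refine ⟨q.copy h.symm rfl, ?_⟩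
      simpa using List.Subset.trans hq (List.subset_cons_self _ _)
    · exact ⟨.cons (contractEdge_adj.mpr ⟨h, u, v, hadj, rfl, rfl⟩) q,
        by simpa using List.cons_subset_cons _ hq⟩

theorem Walk.exists_lift_contractEdge (hxy : G.Adj x y) {a b : V}
    (p : (G.contractEdge x y).Walk a b) {a' : V} (ha' : contractVert x y a' = a) :
    ∃ b', contractVert x y b' = b ∧
      ∃ q : G.Walk a' b', q.support.map (contractVert x y) ⊆ p.support := by
  induction p generalizing a' with
  | nil => exact ⟨a', ha', .nil, by simp [ha']⟩
  | @cons u v _ hadj p ih =>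
    obtain ⟨-, a₀, c₀, hadj₀, ha₀, hc₀⟩ := contractEdge_adj.mp hadj
    obtain ⟨r, hr⟩ := exists_walk_of_contractVert_eq hxy (ha'.trans ha₀.symm)
    obtain ⟨b', hb', q, hq⟩ := ih hc₀
    refine ⟨b', hb', r.append (.cons hadj₀ q), fun z hz => ?_⟩
    simp only [Walk.support_append, Walk.support_cons, List.tail_cons, List.map_append,
      List.mem_append, List.mem_map] at hz
    rcases hz with ⟨z', hz', rfl⟩ | hz
    · simp [hr z' hz', ha']
    · exact List.mem_cons_of_mem _ (hq (List.mem_map.mpr hz))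

theorem ncard_edgeSet_contractEdge_lt [Finite V] (hxy : G.Adj x y) :
    (G.contractEdge x y).edgeSet.ncard < G.edgeSet.ncard := by
  have hsub : (G.contractEdge x y).edgeSet ⊆
      Sym2.map (contractVert x y) '' G.edgeSet \ {s(x, x)} := by
    intro e he
    induction e using Sym2.ind with
    | _ a b =>
      obtain ⟨hne, a', b', hadj, rfl, rfl⟩ := contractEdge_adj.mp he
      refine ⟨⟨s(a', b'), hadj, rfl⟩, ?_⟩
      simp only [Set.mem_singleton_iff, Sym2.eq_iff]
      rintro (⟨h₁, h₂⟩ | ⟨h₁, h₂⟩) <;> exact hne (h₁.trans h₂.symm)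
  have hmem : s(x, x) ∈ Sym2.map (contractVert x y) '' G.edgeSet :=
    ⟨s(x, y), hxy, by simp [contractVert, hxy.ne]⟩
  calc _ ≤ (Sym2.map (contractVert x y) '' G.edgeSet \ {s(x, x)}).ncard := Set.ncard_le_ncard hsub
    _ < (Sym2.map (contractVert x y) '' G.edgeSet).ncard := Set.ncard_sdiff_singleton_lt_of_mem hmem
    _ ≤ _ := Set.ncard_image_le

theorem exists_separates_card_eq_of_contractEdge [Fintype V]
    (hmin : ∀ T, G.Separates A B T → k ≤ T.card) {Y : Finset V}
    (hY : (G.contractEdge x y).Separates (A.image (contractVert x y))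
      (B.image (contractVert x y)) Y) (hYk : Y.card < k) :
    ∃ S, x ∈ S ∧ y ∈ S ∧ G.Separates A B S ∧ S.card = k := by
  set Y' := Finset.univ.filter fun z => contractVert x y z ∈ Y
  have hsep : G.Separates A B Y' := by
    intro a ha b hb p
    obtain ⟨q, hq⟩ := p.exists_map_contractEdge (x := x) (y := y)
    obtain ⟨t, htY, ht⟩ :=
      hY _ (Finset.mem_image_of_mem _ ha) _ (Finset.mem_image_of_mem _ hb) q
    obtain ⟨z, hz, rfl⟩ := List.mem_map.mp (hq ht)
    exact ⟨z, by simpa [Y'] using htY, hz⟩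
  have hmem : ∀ z ∈ Y', z = y ∧ x ∈ Y ∨ z ∈ Y := by
    intro z hz
    have hz := (Finset.mem_filter.mp hz).2
    unfold contractVert at hz
    split_ifs at hz with h <;> simp [h, hz]
  have hxY : x ∈ Y := by
    by_contra hxY
    have hY'Y : Y' ⊆ Y := fun z hz => (hmem z hz).resolve_left fun h => hxY h.2
    exact (hmin _ hsep).not_gt ((Finset.card_le_card hY'Y).trans_lt hYk)
  have hsep' : G.Separates A B (insert y Y) := hsep.mono fun z hz => by
    rcases hmem z hz with ⟨rfl, -⟩ | h
    exacts [Finset.mem_insert_self _ _, Finset.mem_insert_of_mem h]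
  exact ⟨insert y Y, Finset.mem_insert_of_mem hxY, Finset.mem_insert_self _ _, hsep',
    le_antisymm ((Finset.card_insert_le _ _).trans hYk) (hmin _ hsep')⟩

theorem HasVertexDisjointPaths.of_contractEdge (hxy : G.Adj x y)
    (h : (G.contractEdge x y).HasVertexDisjointPaths (A.image (contractVert x y))
      (B.image (contractVert x y)) k) :
    G.HasVertexDisjointPaths A B k := by
  obtain ⟨α, β, P, hα, hβ, -, hdisj⟩ := h
  have hlift : ∀ i, ∃ a ∈ A, ∃ b ∈ B, ∃ q : G.Walk a b, q.IsPath ∧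
      q.support.map (contractVert x y) ⊆ (P i).support := by
    intro i
    obtain ⟨a, ha, ha'⟩ := Finset.mem_image.mp (hα i)
    obtain ⟨b', hb', q, hq⟩ := (P i).exists_lift_contractEdge hxy ha'
    obtain ⟨b, hb, hb''⟩ := Finset.mem_image.mp (hβ i)
    obtain ⟨r, hr⟩ := exists_walk_of_contractVert_eq hxy (hb'.trans hb''.symm)
    refine ⟨a, ha, b, hb, (q.append r).toPath, (q.append r).toPath.2, fun fz hfz => ?_⟩
    obtain ⟨z, hz, rfl⟩ := List.mem_map.mp hfz
    have hz' := (q.append r).support_toPath_subset_support hz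
    rw [Walk.support_append, List.mem_append] at hz'
    rcases hz' with hz' | hz'
    · exact hq (List.mem_map_of_mem hz')
    · rw [hr z (List.mem_of_mem_tail hz'), hb']
      exact (P i).end_mem_support
  choose a ha b hb q hq hsub using hlift
  exact ⟨a, b, q, ha, hb, hq, fun i j hij z hzi hzj =>
    hdisj hij (hsub i (List.mem_map_of_mem hzi)) (hsub j (List.mem_map_of_mem hzj))⟩

end Contraction

/-- A walk up to its first vertex in `S` cannot use `xy`, whose ends both lie in `S`. -/
theorem Separates.of_separates_deleteEdges {S : Finset V} {x y : V} (hxy : x ≠ y) (hx : x ∈ S)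
    (hy : y ∈ S) (hS : G.Separates A B S) (hT : (G.deleteEdges {s(x, y)}).Separates A S T) :
    G.Separates A B T := by
  intro a ha b hb p
  obtain ⟨s, hs, q, -, hsub, hfirst⟩ := p.exists_isPath_to_first_mem S <| by
    obtain ⟨t, ht, htp⟩ := hS a ha b hb p
    exact ⟨t, htp, ht⟩
  have hq : ∀ e ∈ q.edges, e ∈ (G.deleteEdges {s(x, y)}).edgeSet := by
    intro e he
    rw [edgeSet_deleteEdges]
    refine ⟨q.edges_subset_edgeSet he, fun hexy => hxy ?_⟩
    rw [Set.mem_singleton_iff] at hexy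
    subst hexy
    exact (hfirst x (q.fst_mem_support_of_mem_edges he) hx).trans
      (hfirst y (q.snd_mem_support_of_mem_edges he) hy).symm
  obtain ⟨t, ht, htq⟩ := hT a ha s hs (q.transfer _ hq)
  exact ⟨t, ht, hsub (by simpa using htq)⟩

theorem injective_of_pairwise_disjoint_support {ι : Type*} {a b : ι → V}
    {p : ∀ i, G.Walk (a i) (b i)} (h : Pairwise fun i j => (p i).support.Disjoint (p j).support) :
    Function.Injective b := fun i j hij => by
  by_contra hne
  exact h hne (p i).end_mem_support (by rw [hij]; exact (p j).end_mem_support)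

theorem HasVertexDisjointPaths.exists_forall_mem_support_eq_end
    (h : G.HasVertexDisjointPaths A B k) :
    ∃ (a b : Fin k → V) (p : ∀ i, G.Walk (a i) (b i)), (∀ i, a i ∈ A) ∧ (∀ i, (p i).IsPath) ∧
      (Pairwise fun i j => (p i).support.Disjoint (p j).support) ∧
      ∀ i, b i ∈ B ∧ ∀ z ∈ (p i).support, z ∈ B → z = b i := by
  obtain ⟨a, b, p, ha, hb, -, hdisj⟩ := h
  choose b' hb' q hq hsub hfirst using fun i =>
    (p i).exists_isPath_to_first_mem B ⟨b i, (p i).end_mem_support, hb i⟩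
  exact ⟨a, b', q, ha, hq, fun i j hij z hzi hzj => hdisj hij (hsub i hzi) (hsub j hzj),
    fun i => ⟨hb' i, hfirst i⟩⟩

/-- Otherwise the two paths would combine to an `A`–`B` walk avoiding `S`. -/
theorem Separates.mem_of_mem_support_of_mem_support [DecidableEq V] {S : Finset V}
    (hsep : G.Separates A B S) {a b s t z : V} (ha : a ∈ A) (hb : b ∈ B) {p : G.Walk a s}
    {q : G.Walk b t} (hp : p.IsPath) (hq : q.IsPath) (hpS : ∀ z ∈ p.support, z ∈ S → z = s)
    (hqS : ∀ z ∈ q.support, z ∈ S → z = t) (hzp : z ∈ p.support) (hzq : z ∈ q.support) :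
    z ∈ S := by
  obtain ⟨r, hrS, hr⟩ := hsep a ha b hb ((p.takeUntil z hzp).append (q.takeUntil z hzq).reverse)
  rw [Walk.support_append, List.mem_append] at hr
  rcases hr with hr | hr
  · obtain rfl := hpS r (p.support_takeUntil_subset_support hzp hr) hrS
    rwa [hp.eq_of_end_mem_support_takeUntil hzp hr]
  · replace hr : r ∈ (q.takeUntil z hzq).support := by simpa using List.mem_of_mem_tail hr
    obtain rfl := hqS r (q.support_takeUntil_subset_support hzq hr) hrS
    rwa [hq.eq_of_end_mem_support_takeUntil hzq hr]

/-- Cut at their first vertex in `S`, a path from `A` and a path from `B` meet only in `S`, so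
the `|S|` paths on each side pair up through `S`. -/
theorem HasVertexDisjointPaths.glue [DecidableEq V] {S : Finset V} (hsep : G.Separates A B S)
    (hS : S.card = k) (hA : G.HasVertexDisjointPaths A S k)
    (hB : G.HasVertexDisjointPaths B S k) : G.HasVertexDisjointPaths A B k := by
  obtain ⟨a, σ, P, ha, hP, hPd, hσ⟩ := hA.exists_forall_mem_support_eq_end
  obtain ⟨b, τ, Q, hb, hQ, hQd, hτ⟩ := hB.exists_forall_mem_support_eq_end
  have hmeet : ∀ i j z, z ∈ (P i).support → z ∈ (Q j).support → z = σ i ∧ z = τ j := by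
    intro i j z hzP hzQ
    have hzS := hsep.mem_of_mem_support_of_mem_support (ha i) (hb j) (hP i) (hQ j) (hσ i).2
      (hτ j).2 hzP hzQ
    exact ⟨(hσ i).2 z hzP hzS, (hτ j).2 z hzQ hzS⟩
  have hσinj := injective_of_pairwise_disjoint_support hPd
  have hτinj := injective_of_pairwise_disjoint_support hQd
  have hτS : Finset.univ.image τ = S := by
    refine Finset.eq_of_subset_of_card_le (fun _ h => ?_) ?_
    · obtain ⟨j, -, rfl⟩ := Finset.mem_image.mp h
      exact (hτ j).1
    · rw [Finset.card_image_of_injective _ hτinj, Finset.card_univ, Fintype.card_fin, hS]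
  have hρ : ∀ i, ∃ j, τ j = σ i := fun i => by
    simpa [← hτS] using (hσ i).1
  choose ρ hρ using hρ
  have hρinj : Function.Injective ρ := fun i j h => hσinj (by rw [← hρ i, ← hρ j, h])
  let R i := ((P i).append ((Q (ρ i)).reverse.copy (hρ i) rfl)).toPath
  have hR : ∀ i, ∀ z ∈ (R i : G.Walk (a i) (b (ρ i))).support,
      z ∈ (P i).support ∨ z ∈ (Q (ρ i)).support := by
    intro i z hz
    have hz := Walk.support_toPath_subset_support _ hz
    rw [Walk.support_append, List.mem_append] at hz
    exact hz.imp_right fun h => by simpa using List.mem_of_mem_tail h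
  refine ⟨a, fun i => b (ρ i), fun i => R i, ha, fun i => hb (ρ i), fun i => (R i).2,
    fun i j hij z hzi hzj => ?_⟩
  rcases hR i z hzi with h₁ | h₁ <;> rcases hR j z hzj with h₂ | h₂
  · exact hPd hij h₁ h₂
  · have := hmeet i (ρ j) z h₁ h₂
    exact hij (hσinj (this.1.symm.trans (this.2.trans (hρ j))))
  · have := hmeet j (ρ i) z h₂ h₁
    exact hij (hσinj (this.1.symm.trans (this.2.trans (hρ i))).symm)
  · exact hQd (hρinj.ne hij) h₁ h₂

/-- **Menger's theorem**, proved by induction on the number of edges: either contracting an edge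
`xy` keeps all `A`–`B` separators of size at least `k`, or there is a separator `S ∋ x, y` of
size `k`, and then deleting `xy` keeps all `A`–`S` and `S`–`B` separators large. -/
theorem hasVertexDisjointPaths_of_forall_separates [Fintype V] [DecidableEq V]
    (h : ∀ T, G.Separates A B T → k ≤ T.card) : G.HasVertexDisjointPaths A B k := by
  induction hn : G.edgeSet.ncard using Nat.strong_induction_on generalizing G A B with
  | _ n ih =>
  subst hn
  rcases G.edgeSet.eq_empty_or_nonempty with hE | ⟨e, he⟩
  · exact hasVertexDisjointPaths_of_edgeSet_eq_empty hE h
  obtain ⟨x, y, hxy⟩ : ∃ x y, G.Adj x y := by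
    induction e using Sym2.ind with | _ x y => exact ⟨x, y, he⟩
  by_cases hc : ∀ T, (G.contractEdge x y).Separates (A.image (contractVert x y))
      (B.image (contractVert x y)) T → k ≤ T.card
  · exact (ih _ (ncard_edgeSet_contractEdge_lt hxy) hc rfl).of_contractEdge hxy
  push Not at hc
  obtain ⟨Y, hY, hYk⟩ := hc
  obtain ⟨S, hxS, hyS, hS, hSk⟩ := exists_separates_card_eq_of_contractEdge h hY hYk
  have hlt : (G.deleteEdges {s(x, y)}).edgeSet.ncard < G.edgeSet.ncard := by
    rw [edgeSet_deleteEdges]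
    exact Set.ncard_sdiff_singleton_lt_of_mem hxy
  have hAS := ih _ hlt (B := S)
    (fun T hT => h T (hS.of_separates_deleteEdges hxy.ne hxS hyS hT)) rfl
  have hBS := ih _ hlt (A := B) (B := S)
    (fun T hT => h T (hS.symm.of_separates_deleteEdges hxy.ne hxS hyS hT).symm) rfl
  exact (hAS.glue (hS.of_le (deleteEdges_le _)) hSk hBS).mono (deleteEdges_le _)

section InternallyDisjoint

variable [Fintype V] [DecidableRel G.Adj] {u v : V}

theorem hasDisjointPaths_of_hasVertexDisjointPaths (huv : u ≠ v) (hadj : ¬ G.Adj u v)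
    (h : (G.deleteEdges {e | u ∈ e ∨ v ∈ e}).HasVertexDisjointPaths (G.neighborFinset u)
      (G.neighborFinset v) k) : HasDisjointPaths G u v k := by
  obtain ⟨a, b, p, ha, hb, hp, hdisj⟩ := h
  have hle : G.deleteEdges {e | u ∈ e ∨ v ∈ e} ≤ G := deleteEdges_le _
  simp only [mem_neighborFinset] at ha hb
  have hout : ∀ i, u ∉ (p i).support ∧ v ∉ (p i).support := by
    intro i
    have hmem : ∀ z, z ∈ (p i).support → z ≠ b i → z ≠ u ∧ z ≠ v := by
      intro z hz hzb
      obtain ⟨e, he, hze⟩ := (Walk.mem_support_iff_exists_mem_edges.mp hz).resolve_left hzb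
      have he' := (p i).edges_subset_edgeSet he
      rw [edgeSet_deleteEdges] at he'
      exact ⟨fun h => he'.2 (Or.inl (h ▸ hze)), fun h => he'.2 (Or.inr (h ▸ hze))⟩
    have hbu : b i ≠ u := fun h => hadj (h ▸ hb i).symm
    exact ⟨fun hu => (hmem u hu hbu.symm).1 rfl, fun hv => (hmem v hv (hb i).ne).2 rfl⟩
  refine ⟨fun i => .cons (ha i) (((p i).mapLe hle).concat (hb i).symm), fun i => ?_,
    fun i j hij z hzi hzj => ?_⟩
  · rw [Walk.cons_isPath_iff, Walk.support_concat, Walk.support_mapLe_eq_support]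
    refine ⟨((hp i).mapLe hle).concat (by simpa using (hout i).2) _, ?_⟩
    simp [(hout i).1, huv]
  · simp only [Walk.support_cons, Walk.support_concat, Walk.support_mapLe_eq_support,
      List.mem_cons, List.mem_append, List.not_mem_nil, or_false] at hzi hzj
    rcases hzi with rfl | hzi | rfl
    · exact Or.inl rfl
    · rcases hzj with rfl | hzj | rfl
      exacts [Or.inl rfl, absurd hzj (hdisj hij hzi), Or.inr rfl]
    · exact Or.inr rfl

theorem exists_separator_of_not_hasDisjointPaths [DecidableEq V] (huv : u ≠ v)
    (hadj : ¬ G.Adj u v) (h : ¬ HasDisjointPaths G u v k) :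
    ∃ X : Finset V, X.card < k ∧ u ∉ X ∧ v ∉ X ∧ ∀ p : G.Walk u v, ∃ t ∈ X, t ∈ p.support := by
  by_contra! hX
  refine h (hasDisjointPaths_of_hasVertexDisjointPaths huv hadj
    (hasVertexDisjointPaths_of_forall_separates fun T hT => ?_))
  by_contra! hTk
  obtain ⟨q, hq⟩ := hX ((T.erase u).erase v)
    ((Finset.card_erase_le.trans Finset.card_erase_le).trans_lt hTk) (by simp) (by simp)
  obtain ⟨c, d, huc, hvd, m, hum, hvm, hmq⟩ := q.toPath.2.exists_interior huv hadj
  have hmH : ∀ e ∈ m.edges, e ∈ (G.deleteEdges {e | u ∈ e ∨ v ∈ e}).edgeSet := by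
    intro e he
    rw [edgeSet_deleteEdges]
    exact ⟨m.edges_subset_edgeSet he, by
      rintro (hu | hv)
      exacts [hum (m.mem_support_of_mem_edges he hu), hvm (m.mem_support_of_mem_edges he hv)]⟩
  obtain ⟨t, htT, htm⟩ := hT c (by simpa using huc) d (by simpa using hvd) (m.transfer _ hmH)
  rw [Walk.support_transfer] at htm
  refine hq t ?_ (q.support_toPath_subset_support (hmq htm))
  simp only [Finset.mem_erase]
  exact ⟨fun h => hvm (h ▸ htm), fun h => hum (h ▸ htm), htT⟩

end InternallyDisjoint

end SimpleGraph

section SpanningTree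

open SimpleGraph

variable {V : Type*} [Fintype V] [DecidableEq V]

theorem isSpanningTreeOn_star {S : Finset V} {c : V} (hc : c ∈ S) :
    IsSpanningTreeOn S ((S.erase c).image fun v => s(c, v)) := by
  refine ⟨?_, ?_, ?_⟩
  · simp only [Finset.mem_image, Finset.mem_erase]
    rintro _ ⟨v, ⟨hvc, hv⟩, rfl⟩
    refine ⟨by simpa using hvc.symm, fun z hz => ?_⟩
    rcases Sym2.mem_iff.mp hz with rfl | rfl <;> assumption
  · have hstar : ∀ v ∈ S, (fromEdgeSet (((S.erase c).image fun v => s(c, v) : Finset _) :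
        Set (Sym2 V))).Reachable c v := by
      intro v hv
      by_cases hvc : v = c
      · exact hvc ▸ Reachable.refl v
      · refine Adj.reachable ?_
        simp only [fromEdgeSet_adj, Finset.coe_image, Set.mem_image, Finset.mem_coe,
          Finset.mem_erase, Sym2.congr_right]
        exact ⟨⟨v, ⟨hvc, hv⟩, rfl⟩, Ne.symm hvc⟩
    exact fun u hu v hv => (hstar u hu).symm.trans (hstar v hv)
  · rw [Finset.card_image_of_injective _ fun a b h => Sym2.congr_right.mp h,
      Finset.card_erase_add_one hc]

theorem exists_isSpanningTreeOn_forall_sum_le {S : Finset V} (hS : S.Nonempty)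
    (w : Sym2 V → ℝ) :
    ∃ T, IsSpanningTreeOn S T ∧ ∀ T', IsSpanningTreeOn S T' → T.sum w ≤ T'.sum w := by
  classical
  obtain ⟨c, hc⟩ := hS
  obtain ⟨T, hT, hmin⟩ := Finset.exists_min_image
    (Finset.univ.filter fun T => IsSpanningTreeOn S T) (fun T => T.sum w)
    ⟨_, Finset.mem_filter.mpr ⟨Finset.mem_univ _, isSpanningTreeOn_star hc⟩⟩
  exact ⟨T, (Finset.mem_filter.mp hT).2, fun T' hT' => hmin T' (by simpa using hT')⟩

/-- `xy` lies on the cycle that `uv` closes with `p`, so its endpoints stay connected after the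
exchange. -/
theorem IsSpanningTreeOn.exchange {S : Finset V} {T : Finset (Sym2 V)}
    (hT : IsSpanningTreeOn S T) {u v : V} (hu : u ∈ S) (hv : v ∈ S) (huv : u ≠ v)
    (huvT : s(u, v) ∉ T) {p : (fromEdgeSet (T : Set (Sym2 V))).Walk u v} (hp : p.IsPath)
    {x y : V} (hxy : s(x, y) ∈ p.edges) :
    IsSpanningTreeOn S (insert s(u, v) (T.erase s(x, y))) := by
  have hxyT : s(x, y) ∈ T := by simpa using (p.edges_subset_edgeSet hxy).1
  set H := fromEdgeSet (insert s(u, v) T : Set (Sym2 V))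
  have hle : fromEdgeSet (T : Set (Sym2 V)) ≤ H :=
    fromEdgeSet_mono (Set.subset_insert _ _)
  have hvu : H.Adj v u := by simp [H, fromEdgeSet_adj, huv.symm, Sym2.eq_swap]
  have hcycle : (Walk.cons hvu (p.mapLe hle)).IsCycle := by
    refine (Walk.cons_isCycle_iff _ _).mpr ⟨hp.mapLe hle, fun h => huvT ?_⟩
    rw [Walk.edges_mapLe_eq_edges, Sym2.eq_swap] at h
    simpa using (p.edges_subset_edgeSet h).1
  have hreach : (fromEdgeSet ((insert s(u, v) (T.erase s(x, y)) : Finset _) :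
      Set (Sym2 V))).Reachable x y := by
    refine ((adj_and_reachable_delete_edges_iff_exists_cycle.mpr
      ⟨_, _, hcycle, by simp [hxy]⟩).2).mono fun a b hab => ?_
    simp only [deleteEdges_adj, fromEdgeSet_adj, H, Set.mem_insert_iff, Finset.coe_insert,
      Finset.coe_erase, Set.mem_sdiff, Finset.mem_coe, Set.mem_singleton_iff] at hab ⊢
    tauto
  refine ⟨fun e he => ?_, fun a ha b hb => ?_, ?_⟩
  · rcases Finset.mem_insert.mp he with rfl | he
    · refine ⟨by simpa using huv, fun z hz => ?_⟩
      rcases Sym2.mem_iff.mp hz with rfl | rfl <;> assumption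
    · exact hT.1 e (Finset.mem_of_mem_erase he)
  · refine (hT.2.1 a ha b hb).of_forall_adj fun c d hcd => ?_
    rw [fromEdgeSet_adj] at hcd
    by_cases hcdxy : s(c, d) = s(x, y)
    · rcases Sym2.eq_iff.mp hcdxy with ⟨rfl, rfl⟩ | ⟨rfl, rfl⟩
      exacts [hreach, hreach.symm]
    · refine Adj.reachable ((fromEdgeSet_adj _).mpr ⟨?_, hcd.2⟩)
      simpa [hcdxy] using Or.inr hcd.1
  · have hT1 : 1 ≤ T.card := Finset.card_pos.mpr ⟨_, hxyT⟩
    rw [Finset.card_insert_of_notMem fun h => huvT (Finset.mem_of_mem_erase h),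
      Finset.card_erase_of_mem hxyT, ← hT.2.2]
    omega

theorem mk_mem_mstEdges_of_not_reachable {w : Sym2 V → ℝ}
    (hw : ∀ e f : Sym2 V, ¬ e.IsDiag → ¬ f.IsDiag → w e = w f → e = f)
    {S : Finset V} {u v : V} (hu : u ∈ S) (hv : v ∈ S) (huv : u ≠ v)
    (h : ¬ (fromEdgeSet {e | w e < w s(u, v) ∧ ∀ z ∈ e, z ∈ S}).Reachable u v) :
    s(u, v) ∈ mstEdges w S := by
  obtain ⟨T, hT, hmin⟩ := exists_isSpanningTreeOn_forall_sum_le ⟨u, hu⟩ w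
  refine ⟨T, hT, hmin, ?_⟩
  by_contra huvT
  obtain ⟨p, hp⟩ := (hT.2.1 u hu v hv).exists_isPath
  have hpT : ∀ e ∈ p.edges, e ∈ T ∧ ¬ e.IsDiag := fun e he => by
    simpa using p.edges_subset_edgeSet he
  obtain ⟨x, y, hxy, hheavy⟩ : ∃ x y, s(x, y) ∈ p.edges ∧ w s(u, v) ≤ w s(x, y) := by
    by_contra! hlight
    refine h ⟨p.transfer _ fun e he => ?_⟩
    induction e using Sym2.ind with
    | _ x y => exact ⟨⟨hlight x y he, (hT.1 _ (hpT _ he).1).2⟩, (hpT _ he).2⟩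
  have hlt : w s(u, v) < w s(x, y) := by
    refine hheavy.lt_of_ne fun heq => huvT ?_
    rw [hw _ _ (by simpa using huv) (hpT _ hxy).2 heq]
    exact (hpT _ hxy).1
  have hsum := hmin _ (hT.exchange hu hv huv huvT hp hxy)
  rw [Finset.sum_insert fun h => huvT (Finset.mem_of_mem_erase h),
    Finset.sum_erase_eq_sub (hpT _ hxy).1] at hsum
  linarith

theorem mk_mem_Mk_of_not_hasDisjointPaths {w : Sym2 V → ℝ}
    (hw : ∀ e f : Sym2 V, ¬ e.IsDiag → ¬ f.IsDiag → w e = w f → e = f)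
    {k : ℕ} (hk : k ≤ Fintype.card V - 1) {H : SimpleGraph V} {u v : V} (huv : u ≠ v)
    (hadj : ¬ H.Adj u v) (hlight : ∀ e, ¬ e.IsDiag → w e < w s(u, v) → e ∈ H.edgeSet)
    (h : ¬ HasDisjointPaths H u v k) : s(u, v) ∈ Mk w k := by
  classical
  obtain ⟨X₀, hX₀k, huX₀, hvX₀, hX₀⟩ := exists_separator_of_not_hasDisjointPaths huv hadj h
  have hX₀uv : X₀ ⊆ Finset.univ \ {u, v} := fun z hz => by
    simp only [Finset.mem_sdiff, Finset.mem_univ, Finset.mem_insert, Finset.mem_singleton,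
      true_and]
    rintro (rfl | rfl)
    exacts [huX₀ hz, hvX₀ hz]
  obtain ⟨X, hX₀X, hXuv, hXk⟩ := Finset.exists_subsuperset_card_eq hX₀uv (n := k - 1) (by omega)
    (by rw [Finset.card_sdiff_of_subset (Finset.subset_univ _), Finset.card_univ,
      Finset.card_pair huv]; omega)
  have hXu : u ∉ X := fun hu => by simpa using hXuv hu
  have hXv : v ∉ X := fun hv => by simpa using hXuv hv
  refine ⟨X, hXk, mk_mem_mstEdges_of_not_reachable hw (by simpa using hXu) (by simpa using hXv)
    huv fun ⟨p⟩ => ?_⟩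
  have hp : ∀ e ∈ p.edges, e ∈ H.edgeSet ∧ ∀ z ∈ e, z ∉ X := fun e he => by
    have he := p.edges_subset_edgeSet he
    rw [edgeSet_fromEdgeSet] at he
    exact ⟨hlight e he.2 he.1.1, fun z hz => by simpa using he.1.2 z hz⟩
  obtain ⟨t, htX₀, htp⟩ := hX₀ (p.transfer H fun e he => (hp e he).1)
  rw [Walk.support_transfer, Walk.mem_support_iff_exists_mem_edges] at htp
  rcases htp with rfl | ⟨e, he, hte⟩
  exacts [hvX₀ htX₀, (hp e he).2 t hte (hX₀X htX₀)]

end SpanningTree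

theorem stmt_7_general {V : Type*} [Fintype V] [DecidableEq V] (k : ℕ) (G : SimpleGraph V)
    (hk2 : k ≤ Fintype.card V - 1)
    (hG : IsKConstructible k G) :
    ∃ w : Sym2 V → ℝ,
      (∀ e : Sym2 V, ¬ e.IsDiag → 0 < w e) ∧
      (∀ e f : Sym2 V, ¬ e.IsDiag → ¬ f.IsDiag → w e = w f → e = f) ∧
      G.edgeSet ⊆ Mk w k := by
  obtain ⟨l, hnd, hedges, hcon⟩ := hG
  set L := l ++ (Finset.univ \ l.toFinset).toList
  have hL : ∀ e, e ∈ L := fun e => by by_cases he : e ∈ l <;> simp [L, he]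
  have hinj : ∀ e f : Sym2 V, ¬ e.IsDiag → ¬ f.IsDiag →
      (L.idxOf e + 1 : ℝ) = L.idxOf f + 1 → e = f :=
    fun e f _ _ h => (List.idxOf_inj (hL e)).mp (by exact_mod_cast add_right_cancel h)
  refine ⟨fun e => L.idxOf e + 1, fun e _ => by positivity, hinj, fun e he => ?_⟩
  induction e using Sym2.ind with | _ u v =>
  obtain ⟨i, hi, hli⟩ := List.getElem_of_mem (by simpa [← hedges] using he : s(u, v) ∈ l)
  have hidx : L.idxOf s(u, v) = i := by
    rw [← hli, List.idxOf_append_of_mem (List.getElem_mem hi), hnd.idxOf_getElem]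
  have htake : ∀ e, e ∈ l.take i ↔ L.idxOf e < i := fun e => by
    rw [← List.take_append_of_le_length hi.le, List.mem_take_iff_idxOf_lt (hL e)]
  refine mk_mem_Mk_of_not_hasDisjointPaths
    (H := SimpleGraph.fromEdgeSet ((l.take i).toFinset : Set (Sym2 V))) hinj hk2
    (G.ne_of_adj he) ?_ (fun e he hlt => ?_) (hcon i hi u v hli)
  · simp [htake, hidx]
  · simp only [SimpleGraph.edgeSet_fromEdgeSet, Set.mem_sdiff, Finset.mem_coe,
      List.mem_toFinset, htake]
    exact ⟨by exact_mod_cast hidx ▸ (add_lt_add_iff_right 1).mp hlt, he⟩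

/-- if `G = (V, E)` is `k`-constructible, then there are injective
positive edge weights on the complete graph on `V` such that `E ⊆ M_k(G̃)`. -/
theorem stmt_7 {V : Type*} [Fintype V] [DecidableEq V] (k : ℕ) (G : SimpleGraph V)
    (hk1 : 1 ≤ k) (hk2 : k ≤ Fintype.card V - 1)
    (hG : IsKConstructible k G) :
    ∃ w : Sym2 V → ℝ,
      (∀ e : Sym2 V, ¬ e.IsDiag → 0 < w e) ∧
      (∀ e f : Sym2 V, ¬ e.IsDiag → ¬ f.IsDiag → w e = w f → e = f) ∧
      G.edgeSet ⊆ Mk w k :=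
  stmt_7_general k G hk2 hG
end
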